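/- Let $m_1$ be a positive integer and let $C$ be a real $m_1 \times m_1$ matrix with entries $c_{ik} \in [0,1]$. Let $J_1, J_2 \subseteq \{1,\dots,m_1\}$ be disjoint sets with $|J_1| = |J_2| = l \ge 1$, $m_1 > l + 1$, let $0 < \epsilon \le 1/2$, and suppose $\log(m_1 - l) \le 9 l^2 / 16$. Assume: (i) for every $i \in J_1$ and $k \in J_1$, $c_{ik} \ge 1 - \epsilon/2$, and for every $j \in J_2$ and $k \in J_2$, $c_{jk} \ge 1 - \epsilon/2$; (ii) for every $i \in J_1$ and $k \in J_2$, $c_{ik} = 0$, and for every $j \in J_2$ and $k \in J_1$, $c_{jk} = 0$; (iii) for any two indices $i, j$ lying in the same set ($J_1$ or $J_2$), $\sum_{k \notin J_1 \cup J_2} |c_{ik} - c_{jk}| \le \sqrt{\log(m_1 - l)}$. Set $\varepsilon = \sqrt{\,l\epsilon/2 + \sqrt{\log(m_1 - l)}\,}$. Then for any $i, j$ in the same set ($J_1$ or $J_2$), $d(c_{i.}, c_{j.}) \le \varepsilon$, and for any $i \in J_1$ and $j \in J_2$, $d(c_{i.}, c_{j.}) \ge \varepsilon$. -/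

import Mathlib

/-!
Within a cluster, two rows agree up to `ε/2` on their own cluster, both vanish on the other
one, and since all entries lie in `[0, 1]` each squared difference is at most the absolute
difference; summing gives the squared distance bound `l ε/2 + √(log (m₁ - l))`. Across the
clusters every coordinate of `J₁ ∪ J₂` contributes at least `(1 - ε/2)² ≥ 9/16`, so the squared
distance is at least `9l/8`, whereas `ε ≤ 1/2` and `log (m₁ - l) ≤ (3l/4)²` bound the squared
radius by `l/4 + 3l/4 = l`.
-/

open Finset

lemma sq_sub_le_abs_sub_of_mem_Icc {x y : ℝ} (hx : x ∈ Set.Icc (0 : ℝ) 1)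
    (hy : y ∈ Set.Icc (0 : ℝ) 1) : (x - y) ^ 2 ≤ |x - y| := by
  rw [← sq_abs]
  exact sq_le (abs_nonneg _) (abs_sub_le_of_nonneg_of_le hx.1 hx.2 hy.1 hy.2)

lemma card_mul_sq_le_sum_sq {ι : Type*} (s : Finset ι) {x : ι → ℝ} {a : ℝ} (ha : 0 ≤ a)
    (hx : ∀ k ∈ s, a ≤ |x k|) : #s * a ^ 2 ≤ ∑ k ∈ s, x k ^ 2 := by
  simpa using card_nsmul_le_sum s (fun k => x k ^ 2) (a ^ 2) fun k hk =>
    sq_abs (x k) ▸ pow_le_pow_left₀ ha (hx k hk) 2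

section Rows

variable {ι : Type*} [Fintype ι] [DecidableEq ι] {u v : ι → ℝ} {A B : Finset ι}

lemma sum_sq_sub_le_of_near_one_of_eq_zero (hu : ∀ k, u k ∈ Set.Icc (0 : ℝ) 1)
    (hv : ∀ k, v k ∈ Set.Icc (0 : ℝ) 1) (hAB : Disjoint A B) {δ : ℝ}
    (hA : ∀ k ∈ A, 1 - δ ≤ u k ∧ 1 - δ ≤ v k) (hB : ∀ k ∈ B, u k = 0 ∧ v k = 0) :
    ∑ k, (u k - v k) ^ 2 ≤ #A * δ + ∑ k ∈ (A ∪ B)ᶜ, |u k - v k| := by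
  have hA_le : ∑ k ∈ A, |u k - v k| ≤ #A * δ := by
    simpa using sum_le_card_nsmul A (fun k => |u k - v k|) δ fun k hk =>
      abs_sub_le_iff.2 ⟨by linarith [(hA k hk).2, (hu k).2], by linarith [(hA k hk).1, (hv k).2]⟩
  have hB_eq : ∑ k ∈ B, |u k - v k| = 0 :=
    sum_eq_zero fun k hk => by simp [(hB k hk).1, (hB k hk).2]
  calc ∑ k, (u k - v k) ^ 2 ≤ ∑ k, |u k - v k| :=
        sum_le_sum fun k _ => sq_sub_le_abs_sub_of_mem_Icc (hu k) (hv k)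
    _ = ∑ k ∈ A, |u k - v k| + ∑ k ∈ B, |u k - v k| + ∑ k ∈ (A ∪ B)ᶜ, |u k - v k| := by
        rw [← sum_union hAB, sum_add_sum_compl]
    _ ≤ #A * δ + ∑ k ∈ (A ∪ B)ᶜ, |u k - v k| := by linarith

lemma card_add_card_mul_sq_le_sum_sq_sub (hAB : Disjoint A B) {a : ℝ} (ha : 0 ≤ a)
    (hA : ∀ k ∈ A, a ≤ u k ∧ v k = 0) (hB : ∀ k ∈ B, u k = 0 ∧ a ≤ v k) :
    (#A + #B) * a ^ 2 ≤ ∑ k, (u k - v k) ^ 2 := by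
  have hsep : ∀ k ∈ A ∪ B, a ≤ |u k - v k| := by
    intro k hk
    rcases mem_union.1 hk with hk | hk
    · obtain ⟨hu, hv⟩ := hA k hk
      rw [hv, sub_zero]
      exact hu.trans (le_abs_self _)
    · obtain ⟨hu, hv⟩ := hB k hk
      rw [hu, zero_sub, abs_neg]
      exact hv.trans (le_abs_self _)
  calc (#A + #B) * a ^ 2 = #(A ∪ B) * a ^ 2 := by rw [card_union_of_disjoint hAB]; push_cast; ring
    _ ≤ ∑ k ∈ A ∪ B, (u k - v k) ^ 2 := card_mul_sq_le_sum_sq _ ha hsep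
    _ ≤ ∑ k, (u k - v k) ^ 2 := sum_le_univ_sum_of_nonneg fun k => sq_nonneg _

end Rows

theorem msc_dbscan_full_general
    (m₁ : ℕ) (C : Fin m₁ → Fin m₁ → ℝ)
    (hC : ∀ i k, C i k ∈ Set.Icc (0 : ℝ) 1)
    (J₁ J₂ : Finset (Fin m₁)) (hdisj : Disjoint J₁ J₂) (l : ℕ)
    (hcard₁ : J₁.card = l) (hcard₂ : J₂.card = l)
    (ε : ℝ) (hε : ε ≤ 1 / 2)
    (hlog : Real.log ((m₁ : ℝ) - (l : ℝ)) ≤ 9 * (l : ℝ) ^ 2 / 16)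
    (hin₁ : ∀ i ∈ J₁, ∀ k ∈ J₁, 1 - ε / 2 ≤ C i k)
    (hin₂ : ∀ j ∈ J₂, ∀ k ∈ J₂, 1 - ε / 2 ≤ C j k)
    (hcross₁ : ∀ i ∈ J₁, ∀ k ∈ J₂, C i k = 0)
    (hcross₂ : ∀ j ∈ J₂, ∀ k ∈ J₁, C j k = 0)
    (hout : ∀ i j : Fin m₁, ((i ∈ J₁ ∧ j ∈ J₁) ∨ (i ∈ J₂ ∧ j ∈ J₂)) →
      ∑ k ∈ (J₁ ∪ J₂)ᶜ, |C i k - C j k| ≤ Real.sqrt (Real.log ((m₁ : ℝ) - (l : ℝ)))) :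
    (∀ i j : Fin m₁, ((i ∈ J₁ ∧ j ∈ J₁) ∨ (i ∈ J₂ ∧ j ∈ J₂)) →
        Real.sqrt (∑ k, (C i k - C j k) ^ 2) ≤
          Real.sqrt ((l : ℝ) * ε / 2 + Real.sqrt (Real.log ((m₁ : ℝ) - (l : ℝ))))) ∧
    (∀ i ∈ J₁, ∀ j ∈ J₂,
        Real.sqrt ((l : ℝ) * ε / 2 + Real.sqrt (Real.log ((m₁ : ℝ) - (l : ℝ)))) ≤
          Real.sqrt (∑ k, (C i k - C j k) ^ 2)) := by
  refine ⟨?_, fun i hi j hj => Real.sqrt_le_sqrt ?_⟩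
  · rintro i j (⟨hi, hj⟩ | ⟨hi, hj⟩) <;> apply Real.sqrt_le_sqrt
    · have := sum_sq_sub_le_of_near_one_of_eq_zero (hC i) (hC j) hdisj (δ := ε / 2)
        (fun k hk => ⟨hin₁ i hi k hk, hin₁ j hj k hk⟩)
        (fun k hk => ⟨hcross₁ i hi k hk, hcross₁ j hj k hk⟩)
      rw [hcard₁] at this
      linarith [hout i j (.inl ⟨hi, hj⟩)]
    · have := sum_sq_sub_le_of_near_one_of_eq_zero (hC i) (hC j) hdisj.symm (δ := ε / 2)
        (fun k hk => ⟨hin₂ i hi k hk, hin₂ j hj k hk⟩)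
        (fun k hk => ⟨hcross₂ i hi k hk, hcross₂ j hj k hk⟩)
      rw [hcard₂, union_comm] at this
      linarith [hout i j (.inr ⟨hi, hj⟩)]
  · have hsqrt_log : Real.sqrt (Real.log ((m₁ : ℝ) - l)) ≤ 3 * l / 4 :=
      Real.sqrt_le_iff.2 ⟨by positivity, by linarith⟩
    have hsep := card_add_card_mul_sq_le_sum_sq_sub hdisj (a := 1 - ε / 2) (by linarith)
      (fun k hk => ⟨hin₁ i hi k hk, hcross₂ j hj k hk⟩)
      (fun k hk => ⟨hcross₁ i hi k hk, hin₂ j hj k hk⟩)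
    rw [hcard₁, hcard₂] at hsep
    have hsq : 9 / 16 ≤ (1 - ε / 2) ^ 2 := by nlinarith
    nlinarith [mul_le_mul_of_nonneg_left hsq (Nat.cast_nonneg (α := ℝ) l)]

/-- Full Theorem 2 of the paper (MSC-DBSCAN) in deterministic form: with the
ε-similarity condition within each of the two disjoint clusters `J₁` and `J₂`
of equal size `l`, vanishing cross-cluster similarities, and controlled
contributions of the non-clustered slices, the Euclidean distance between two
rows in the same cluster is at most the DBSCAN radius
`ε' = √(l*ε/2 + √(log (m₁ - l)))`, while the distance between rows from
different clusters is at least `ε'`. -/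
theorem msc_dbscan_full
    (m₁ : ℕ) (hm₁ : 0 < m₁) (C : Fin m₁ → Fin m₁ → ℝ)
    (hC : ∀ i k, C i k ∈ Set.Icc (0 : ℝ) 1)
    (J₁ J₂ : Finset (Fin m₁)) (hdisj : Disjoint J₁ J₂) (l : ℕ)
    (hcard₁ : J₁.card = l) (hcard₂ : J₂.card = l) (hl : 1 ≤ l)
    (hml : l + 1 < m₁)
    (ε : ℝ) (hε0 : 0 < ε) (hε : ε ≤ 1 / 2)
    (hlog : Real.log ((m₁ : ℝ) - (l : ℝ)) ≤ 9 * (l : ℝ) ^ 2 / 16)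
    (hin₁ : ∀ i ∈ J₁, ∀ k ∈ J₁, 1 - ε / 2 ≤ C i k)
    (hin₂ : ∀ j ∈ J₂, ∀ k ∈ J₂, 1 - ε / 2 ≤ C j k)
    (hcross₁ : ∀ i ∈ J₁, ∀ k ∈ J₂, C i k = 0)
    (hcross₂ : ∀ j ∈ J₂, ∀ k ∈ J₁, C j k = 0)
    (hout : ∀ i j : Fin m₁, ((i ∈ J₁ ∧ j ∈ J₁) ∨ (i ∈ J₂ ∧ j ∈ J₂)) →
      ∑ k ∈ (J₁ ∪ J₂)ᶜ, |C i k - C j k| ≤ Real.sqrt (Real.log ((m₁ : ℝ) - (l : ℝ)))) :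
    (∀ i j : Fin m₁, ((i ∈ J₁ ∧ j ∈ J₁) ∨ (i ∈ J₂ ∧ j ∈ J₂)) →
        Real.sqrt (∑ k, (C i k - C j k) ^ 2) ≤
          Real.sqrt ((l : ℝ) * ε / 2 + Real.sqrt (Real.log ((m₁ : ℝ) - (l : ℝ))))) ∧
    (∀ i ∈ J₁, ∀ j ∈ J₂,
        Real.sqrt ((l : ℝ) * ε / 2 + Real.sqrt (Real.log ((m₁ : ℝ) - (l : ℝ)))) ≤
          Real.sqrt (∑ k, (C i k - C j k) ^ 2)) :=
  msc_dbscan_full_general m₁ C hC J₁ J₂ hdisj l hcard₁ hcard₂ ε hε hlog hin₁ hin₂ hcross₁ hcross₂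
    hout
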